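/- Let x* ∈ ℝ_{>0}^n be a complex balanced steady state of a GLV system generated by (G,κ). Then the function V(x) = Σ_{i=1}^n (log x_i - log x*_i)^2 is nonincreasing along the flow: for all x ∈ ℝ_{>0}^n, ⟨diag(x) f(x), ∇V(x)⟩ ≤ 0, with equality iff log x - log x* ∈ S^⊥. -/

import Mathlib

/-!
Put `w = log x - log x*` and `a_i = ⟪y_i, w⟫`. Each monomial factors as
`x^{y_i} = (x*)^{y_i} e^{a_i}`, so with the edge weights `c_{ij} = κ_{ij} (x*)^{y_i}`
the Lie derivative is `2 ∑ c_{ij} e^{a_i} (a_j - a_i)`. Complex balance says that `c` is a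
balanced flow on the graph, hence `∑ c_{ij} (e^{a_j} - e^{a_i}) = 0`. Subtracting this, every
edge contributes `c_{ij} (e^{a_i} (a_j - a_i) - (e^{a_j} - e^{a_i})) ≤ 0` by convexity of `exp`,
with equality exactly when `a_i = a_j`, i.e. when `w ⊥ y_j - y_i`.
-/

open Real Finset
open scoped RealInnerProductSpace

namespace Real

theorem exp_mul_sub_lt_exp_sub_exp {a b : ℝ} (hab : a ≠ b) :
    exp a * (b - a) < exp b - exp a :=
  calc exp a * (b - a) < exp a * (exp (b - a) - 1) :=
        mul_lt_mul_of_pos_left (by linarith [add_one_lt_exp (sub_ne_zero.2 hab.symm)]) (exp_pos a)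
    _ = exp b - exp a := by rw [mul_sub, ← exp_add, add_sub_cancel, mul_one]

theorem exp_mul_sub_le_exp_sub_exp (a b : ℝ) : exp a * (b - a) ≤ exp b - exp a := by
  rcases eq_or_ne a b with rfl | hab
  · simp
  · exact (exp_mul_sub_lt_exp_sub_exp hab).le

theorem exp_mul_sub_eq_exp_sub_exp_iff {a b : ℝ} : exp a * (b - a) = exp b - exp a ↔ a = b :=
  ⟨fun h => by_contra fun hab => (exp_mul_sub_lt_exp_sub_exp hab).ne h, by rintro rfl; simp⟩

end Real

section BalancedWeights

variable {ι : Type*} [Fintype ι] [DecidableEq ι] {E : Finset (ι × ι)}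

theorem Finset.sum_mul_apply_snd_eq_of_balanced {R : Type*} [CommSemiring R] {c : ι × ι → R}
    (hc : ∀ i, ∑ e ∈ E with e.1 = i, c e = ∑ e ∈ E with e.2 = i, c e) (φ : ι → R) :
    ∑ e ∈ E, c e * φ e.2 = ∑ e ∈ E, c e * φ e.1 := by
  have fiber (p : ι × ι → ι) (i : ι) :
      ∑ e ∈ E with p e = i, c e * φ (p e) = (∑ e ∈ E with p e = i, c e) * φ i := by
    rw [sum_mul]
    exact sum_congr rfl fun e he => by rw [(mem_filter.1 he).2]
  rw [← sum_fiberwise E Prod.snd, ← sum_fiberwise E Prod.fst]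
  exact sum_congr rfl fun i _ => by rw [fiber Prod.snd, fiber Prod.fst, hc]

theorem sum_mul_exp_mul_sub_nonpos_of_balanced {c : ι × ι → ℝ}
    (hc : ∀ i, ∑ e ∈ E with e.1 = i, c e = ∑ e ∈ E with e.2 = i, c e)
    (hpos : ∀ e ∈ E, 0 < c e) (a : ι → ℝ) :
    ∑ e ∈ E, c e * exp (a e.1) * (a e.2 - a e.1) ≤ 0 ∧
      (∑ e ∈ E, c e * exp (a e.1) * (a e.2 - a e.1) = 0 ↔ ∀ e ∈ E, a e.1 = a e.2) := by
  set d : ι × ι → ℝ := fun e =>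
    c e * (exp (a e.1) * (a e.2 - a e.1) - (exp (a e.2) - exp (a e.1)))
  have hsum : ∑ e ∈ E, c e * exp (a e.1) * (a e.2 - a e.1) = ∑ e ∈ E, d e := by
    have := Finset.sum_mul_apply_snd_eq_of_balanced hc fun i => exp (a i)
    simp only [d, mul_sub, sum_sub_distrib, this, sub_self, sub_zero, mul_assoc]
  have hd : ∀ e ∈ E, d e ≤ 0 := fun e he =>
    mul_nonpos_of_nonneg_of_nonpos (hpos e he).le (sub_nonpos.2 (exp_mul_sub_le_exp_sub_exp _ _))
  have hd_eq_zero : ∀ e ∈ E, d e = 0 ↔ a e.1 = a e.2 := fun e he => by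
    simp only [d, mul_eq_zero, (hpos e he).ne', false_or, sub_eq_zero,
      exp_mul_sub_eq_exp_sub_exp_iff]
  rw [hsum]
  exact ⟨sum_nonpos hd, (sum_eq_zero_iff_of_nonpos hd).trans (forall₂_congr hd_eq_zero)⟩

end BalancedWeights

theorem Submodule.mem_orthogonal_span_iff {𝕜 F : Type*} [RCLike 𝕜] [NormedAddCommGroup F]
    [InnerProductSpace 𝕜 F] {s : Set F} {w : F} :
    w ∈ (span 𝕜 s)ᗮ ↔ ∀ u ∈ s, inner 𝕜 u w = 0 := by
  rw [← span_singleton_le_iff_mem, ← isOrtho_iff_le, isOrtho_comm, isOrtho_span]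
  simp

section EuclideanSpace

variable {ι : Type*} [Fintype ι]

theorem prod_rpow_eq_prod_rpow_mul_exp_inner {x z w : EuclideanSpace ℝ ι}
    (hx : ∀ k, 0 < x k) (hz : ∀ k, 0 < z k) (hw : ∀ k, w k = log (x k) - log (z k))
    (u : EuclideanSpace ℝ ι) :
    ∏ k, x k ^ u k = (∏ k, z k ^ u k) * exp ⟪u, w⟫ := by
  rw [PiLp.inner_apply, exp_sum, ← prod_mul_distrib]
  refine prod_congr rfl fun k _ => ?_
  rw [rpow_def_of_pos (hx k), rpow_def_of_pos (hz k), ← exp_add, RCLike.inner_apply,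
    conj_trivial, hw]
  ring_nf

theorem inner_eq_two_mul_inner_of_apply_eq {x p v g w : EuclideanSpace ℝ ι}
    (hx : ∀ k, x k ≠ 0) (hv : ∀ k, v k = x k * p k) (hg : ∀ k, g k = 2 * w k / x k) :
    ⟪v, g⟫ = 2 * ⟪p, w⟫ := by
  simp only [PiLp.inner_apply, RCLike.inner_apply, conj_trivial, mul_sum]
  refine sum_congr rfl fun k _ => ?_
  rw [hv, hg]
  field_simp [hx k]

end EuclideanSpace

theorem glv_Lyapunov_general {n m : ℕ}
    (y : Fin m → EuclideanSpace ℝ (Fin n))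
    (E : Finset (Fin m × Fin m))
    (κ : Fin m × Fin m → ℝ) (hκ : ∀ e ∈ E, 0 < κ e)
    (S : Submodule ℝ (EuclideanSpace ℝ (Fin n)))
    (hS : S = Submodule.span ℝ {v : EuclideanSpace ℝ (Fin n) | ∃ e ∈ E, v = y e.2 - y e.1})
    (f : EuclideanSpace ℝ (Fin n) → EuclideanSpace ℝ (Fin n))
    (hf : ∀ x, f x = ∑ e ∈ E, (κ e * ∏ k, x k ^ (y e.1 k)) • (y e.2 - y e.1))
    (xs : EuclideanSpace ℝ (Fin n)) (hxs : ∀ k, 0 < xs k)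
    (hcb : ∀ i : Fin m,
      ∑ e ∈ E.filter (fun e => e.1 = i), κ e * ∏ k, xs k ^ (y i k) =
      ∑ e ∈ E.filter (fun e => e.2 = i), κ e * ∏ k, xs k ^ (y e.1 k))
    (x : EuclideanSpace ℝ (Fin n)) (hx : ∀ k, 0 < x k)
    -- v = diag(x) f(x), g = ∇V(x), w = log x - log x*
    (v g w : EuclideanSpace ℝ (Fin n))
    (hv : ∀ k, v k = x k * f x k)
    (hg : ∀ k, g k = 2 * (Real.log (x k) - Real.log (xs k)) / x k)
    (hw : ∀ k, w k = Real.log (x k) - Real.log (xs k)) :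
    ⟪v, g⟫ ≤ 0 ∧ (⟪v, g⟫ = 0 ↔ w ∈ Sᗮ) := by
  set a : Fin m → ℝ := fun i => ⟪y i, w⟫
  set c : Fin m × Fin m → ℝ := fun e => κ e * ∏ k, xs k ^ y e.1 k
  have hc_balanced : ∀ i, ∑ e ∈ E with e.1 = i, c e = ∑ e ∈ E with e.2 = i, c e := fun i => by
    refine (sum_congr rfl fun e he => ?_).trans (hcb i)
    rw [← (mem_filter.1 he).2]
  have hc_pos : ∀ e ∈ E, 0 < c e := fun e he =>
    mul_pos (hκ e he) (prod_pos fun k _ => rpow_pos_of_pos (hxs k) _)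
  have hvg : ⟪v, g⟫ = 2 * ⟪f x, w⟫ :=
    inner_eq_two_mul_inner_of_apply_eq (fun k => (hx k).ne') hv fun k => by rw [hg, hw]
  have hfw : ⟪f x, w⟫ = ∑ e ∈ E, c e * exp (a e.1) * (a e.2 - a e.1) := by
    rw [hf, sum_inner]
    refine sum_congr rfl fun e _ => ?_
    rw [real_inner_smul_left, prod_rpow_eq_prod_rpow_mul_exp_inner hx hxs hw, inner_sub_left]
    ring
  have hw_mem : w ∈ Sᗮ ↔ ∀ e ∈ E, a e.1 = a e.2 := by
    rw [hS, Submodule.mem_orthogonal_span_iff]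
    refine ⟨fun h e he => ?_, fun h u ⟨e, he, hu⟩ => ?_⟩
    · have := h _ ⟨e, he, rfl⟩
      rw [inner_sub_left, sub_eq_zero] at this
      exact this.symm
    · rw [hu, inner_sub_left]
      exact sub_eq_zero.2 (h e he).symm
  obtain ⟨hle, heq⟩ := sum_mul_exp_mul_sub_nonpos_of_balanced hc_balanced hc_pos a
  rw [hvg, hfw, hw_mem, ← heq]
  exact ⟨by linarith, ⟨fun h => by linarith, fun h => by linarith⟩⟩

theorem glv_Lyapunov {n m : ℕ}
    (y : Fin m → EuclideanSpace ℝ (Fin n))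
    (E : Finset (Fin m × Fin m)) (hE : ∀ e ∈ E, e.1 ≠ e.2)
    (κ : Fin m × Fin m → ℝ) (hκ : ∀ e ∈ E, 0 < κ e)
    (S : Submodule ℝ (EuclideanSpace ℝ (Fin n)))
    (hS : S = Submodule.span ℝ {v : EuclideanSpace ℝ (Fin n) | ∃ e ∈ E, v = y e.2 - y e.1})
    (f : EuclideanSpace ℝ (Fin n) → EuclideanSpace ℝ (Fin n))
    (hf : ∀ x, f x = ∑ e ∈ E, (κ e * ∏ k, x k ^ (y e.1 k)) • (y e.2 - y e.1))
    (xs : EuclideanSpace ℝ (Fin n)) (hxs : ∀ k, 0 < xs k)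
    (hcb : ∀ i : Fin m,
      ∑ e ∈ E.filter (fun e => e.1 = i), κ e * ∏ k, xs k ^ (y i k) =
      ∑ e ∈ E.filter (fun e => e.2 = i), κ e * ∏ k, xs k ^ (y e.1 k))
    (x : EuclideanSpace ℝ (Fin n)) (hx : ∀ k, 0 < x k)
    -- v = diag(x) f(x), g = ∇V(x), w = log x - log x*
    (v g w : EuclideanSpace ℝ (Fin n))
    (hv : ∀ k, v k = x k * f x k)
    (hg : ∀ k, g k = 2 * (Real.log (x k) - Real.log (xs k)) / x k)
    (hw : ∀ k, w k = Real.log (x k) - Real.log (xs k)) :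
    ⟪v, g⟫ ≤ 0 ∧ (⟪v, g⟫ = 0 ↔ w ∈ Sᗮ) :=
  glv_Lyapunov_general y E κ hκ S hS f hf xs hxs hcb x hx v g w hv hg hw
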